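/- Let a and b be linear operators on ℂ² satisfying ab + ba = 1, a² = 0, b² = 0, let φ₀ satisfy aφ₀ = 0 and Ψ₀ satisfy b*Ψ₀ = 0 with ⟨φ₀, Ψ₀⟩ = 1, set φ₁ := bφ₀, Ψ₁ := a*Ψ₀, and define S_φ f := ⟨φ₀,f⟩φ₀ + ⟨φ₁,f⟩φ₁ and S_Ψ f := ⟨Ψ₀,f⟩Ψ₀ + ⟨Ψ₁,f⟩Ψ₁. Then S_φ S_Ψ = S_Ψ S_φ = 1, i.e. S_φ = S_Ψ⁻¹. -/

import Mathlib

/-!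
The vectors `φ₀, φ₁ = b φ₀` and `Ψ₀, Ψ₁ = a* Ψ₀` are biorthogonal: `⟪φᵢ, Ψⱼ⟫ = δᵢⱼ`, the only
nontrivial entry being `⟪b φ₀, a* Ψ₀⟫ = ⟪a b φ₀, Ψ₀⟫ = ⟪(1 - b a) φ₀, Ψ₀⟫ = 1`. Biorthogonality
makes `φ` linearly independent, hence a basis of ℂ², and gives
`S_φ S_Ψ f = ∑ ⟪Ψᵢ, f⟫ φᵢ`, which fixes every `φⱼ` and is therefore the identity.
-/

open Matrix
open scoped InnerProductSpace ComplexOrder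

noncomputable section

/-- Action of a 2×2 complex matrix (an operator) on a vector of ℂ². -/
def act (A : Matrix (Fin 2) (Fin 2) ℂ) (x : EuclideanSpace ℂ (Fin 2)) :
    EuclideanSpace ℂ (Fin 2) := WithLp.toLp 2 (A.mulVec x)

section Biorthogonal

variable (𝕜 : Type*) {E ι : Type*} [RCLike 𝕜] [NormedAddCommGroup E] [InnerProductSpace 𝕜 E]
  [DecidableEq ι]

def IsBiorthogonal (φ Ψ : ι → E) : Prop :=
  ∀ i j, ⟪φ i, Ψ j⟫_𝕜 = if i = j then 1 else 0

variable {𝕜} {φ Ψ : ι → E}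

theorem IsBiorthogonal.symm (h : IsBiorthogonal 𝕜 φ Ψ) : IsBiorthogonal 𝕜 Ψ φ := by
  intro i j
  rw [← inner_conj_symm, h j i]
  split_ifs with hij hji hji <;> simp_all

theorem IsBiorthogonal.inner_sum_inner_smul [Fintype ι] (h : IsBiorthogonal 𝕜 φ Ψ) (j : ι) (f : E) :
    ⟪φ j, ∑ i, ⟪Ψ i, f⟫_𝕜 • Ψ i⟫_𝕜 = ⟪Ψ j, f⟫_𝕜 := by
  simp [inner_sum, inner_smul_right, h j]

theorem IsBiorthogonal.linearIndependent_right (h : IsBiorthogonal 𝕜 φ Ψ) :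
    LinearIndependent 𝕜 Ψ := by
  rw [linearIndependent_iff']
  intro s g hg i hi
  have := congrArg (inner 𝕜 (φ i)) hg
  simpa [inner_sum, inner_smul_right, h i, hi] using this

theorem IsBiorthogonal.sum_inner_smul_right [Fintype ι] [FiniteDimensional 𝕜 E]
    (h : IsBiorthogonal 𝕜 φ Ψ) (hcard : Fintype.card ι = Module.finrank 𝕜 E) (f : E) :
    ∑ i, ⟪φ i, f⟫_𝕜 • Ψ i = f := by
  let L : E →ₗ[𝕜] E := ∑ i, (innerₛₗ 𝕜 (φ i)).smulRight (Ψ i)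
  have hL : L = LinearMap.id := by
    refine LinearMap.ext_on_range
      (h.linearIndependent_right.span_eq_top_of_card_eq_finrank' hcard) fun j => ?_
    simp [L, h _ j]
  simpa [L] using LinearMap.congr_fun hL f

end Biorthogonal

section PseudoFermion

lemma act_eq_toEuclideanLin (A : Matrix (Fin 2) (Fin 2) ℂ) :
    act A = Matrix.toEuclideanLin A :=
  rfl

lemma act_mul (A B : Matrix (Fin 2) (Fin 2) ℂ) (x : EuclideanSpace ℂ (Fin 2)) :
    act (A * B) x = act A (act B x) := by
  simp [act_eq_toEuclideanLin]

lemma inner_act_left (A : Matrix (Fin 2) (Fin 2) ℂ) (x y : EuclideanSpace ℂ (Fin 2)) :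
    ⟪act A x, y⟫_ℂ = ⟪x, act Aᴴ y⟫_ℂ := by
  rw [act_eq_toEuclideanLin, act_eq_toEuclideanLin, toEuclideanLin_conjTranspose_eq_adjoint,
    LinearMap.adjoint_inner_right]

lemma eq_one_of_act_eq_self (A : Matrix (Fin 2) (Fin 2) ℂ) (h : ∀ x, act A x = x) : A = 1 := by
  apply Matrix.toEuclideanLin.injective
  ext1 x
  exact (h x).trans (by simp)

lemma act_mul_eq_self_of_anticomm (a b : Matrix (Fin 2) (Fin 2) ℂ) (hab : a * b + b * a = 1)
    (x : EuclideanSpace ℂ (Fin 2)) (hx : act a x = 0) : act (a * b) x = x := by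
  have := congrArg (act · x) hab
  rw [act_eq_toEuclideanLin] at hx
  simpa [act_eq_toEuclideanLin, hx] using this

theorem isBiorthogonal_pseudoFermion (a b : Matrix (Fin 2) (Fin 2) ℂ) (hab : a * b + b * a = 1)
    (φ₀ Ψ₀ : EuclideanSpace ℂ (Fin 2)) (hvacφ : act a φ₀ = 0) (hvacΨ : act bᴴ Ψ₀ = 0)
    (hnorm : ⟪φ₀, Ψ₀⟫_ℂ = 1) :
    IsBiorthogonal ℂ ![φ₀, act b φ₀] ![Ψ₀, act aᴴ Ψ₀] := by
  simp only [IsBiorthogonal, Fin.forall_fin_two, cons_val_zero, cons_val_one, if_true,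
    Fin.zero_ne_one, one_ne_zero, if_false]
  refine ⟨⟨hnorm, ?_⟩, ?_, ?_⟩
  · rw [← inner_act_left, hvacφ, inner_zero_left]
  · rw [inner_act_left, hvacΨ, inner_zero_right]
  · rw [← inner_act_left, ← act_mul, act_mul_eq_self_of_anticomm a b hab φ₀ hvacφ, hnorm]

end PseudoFermion

theorem stmt7_general (a b Sφ SΨ : Matrix (Fin 2) (Fin 2) ℂ)
    (hab : a * b + b * a = 1)
    (φ₀ Ψ₀ : EuclideanSpace ℂ (Fin 2))
    (hvacφ : act a φ₀ = 0) (hvacΨ : act bᴴ Ψ₀ = 0)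
    (hnorm : ⟪φ₀, Ψ₀⟫_ℂ = 1)
    (hSφ : ∀ f, act Sφ f = ⟪φ₀, f⟫_ℂ • φ₀ + ⟪act b φ₀, f⟫_ℂ • act b φ₀)
    (hSΨ : ∀ f, act SΨ f = ⟪Ψ₀, f⟫_ℂ • Ψ₀ + ⟪act aᴴ Ψ₀, f⟫_ℂ • act aᴴ Ψ₀) :
    Sφ * SΨ = 1 ∧ SΨ * Sφ = 1 ∧ Sφ = SΨ⁻¹ := by
  set φ := ![φ₀, act b φ₀]
  set Ψ := ![Ψ₀, act aᴴ Ψ₀]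
  have hbi : IsBiorthogonal ℂ φ Ψ := isBiorthogonal_pseudoFermion a b hab φ₀ Ψ₀ hvacφ hvacΨ hnorm
  have hSφ' : ∀ f, act Sφ f = ∑ i, ⟪φ i, f⟫_ℂ • φ i := by simp [φ, hSφ]
  have hSΨ' : ∀ f, act SΨ f = ∑ i, ⟪Ψ i, f⟫_ℂ • Ψ i := by simp [Ψ, hSΨ]
  have hone : Sφ * SΨ = 1 := eq_one_of_act_eq_self _ fun f => by
    rw [act_mul, hSφ', hSΨ']
    simp only [hbi.inner_sum_inner_smul]
    exact hbi.symm.sum_inner_smul_right (by simp) f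
  have hone' : SΨ * Sφ = 1 := mul_eq_one_comm.mp hone
  exact ⟨hone, hone', (inv_eq_right_inv hone').symm⟩

/-- `S_φ S_Ψ = S_Ψ S_φ = 1`, i.e. `S_φ = S_Ψ⁻¹`. -/
theorem stmt7 (a b Sφ SΨ : Matrix (Fin 2) (Fin 2) ℂ)
    (hab : a * b + b * a = 1) (ha2 : a * a = 0) (hb2 : b * b = 0)
    (φ₀ Ψ₀ : EuclideanSpace ℂ (Fin 2))
    (hvacφ : act a φ₀ = 0) (hvacΨ : act bᴴ Ψ₀ = 0)
    (hnorm : ⟪φ₀, Ψ₀⟫_ℂ = 1)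
    (hSφ : ∀ f, act Sφ f = ⟪φ₀, f⟫_ℂ • φ₀ + ⟪act b φ₀, f⟫_ℂ • act b φ₀)
    (hSΨ : ∀ f, act SΨ f = ⟪Ψ₀, f⟫_ℂ • Ψ₀ + ⟪act aᴴ Ψ₀, f⟫_ℂ • act aᴴ Ψ₀) :
    Sφ * SΨ = 1 ∧ SΨ * Sφ = 1 ∧ Sφ = SΨ⁻¹ :=
  stmt7_general a b Sφ SΨ hab φ₀ Ψ₀ hvacφ hvacΨ hnorm hSφ hSΨ
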